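/- arXiv:2306.17461 — 3 statements merged into one kernel-verified Lean document; each statement's English description precedes it below -/
import Mathlib

section
/- For all lists A, B, C, D over a type with decidable equality, if C.length = D.length then d(A, B) ≤ d(A ++ C, B ++ D). In particular, the edit distance between prefixes is non-decreasing along any diagonal of the DP grid. -/
/-- Costs for the Levenshtein distance (as in the former `Mathlib.Data.List.EditDistance.Defs`). -/
structure Levenshtein.Cost (α β δ : Type*) where
  delete : α → δ
  insert : β → δ
  substitute : α → β → δ

/-- The default unit costs (former Mathlib `Levenshtein.defaultCost`). -/
def Levenshtein.defaultCost {α : Type*} [DecidableEq α] : Levenshtein.Cost α α ℕ where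
  delete _ := 1
  insert _ := 1
  substitute a b := if a = b then 0 else 1

/-- The Levenshtein distance with costs `C` (same value as the former Mathlib `levenshtein`). -/
def levenshtein {α β δ : Type*} [AddZeroClass δ] [Min δ] (C : Levenshtein.Cost α β δ) :
    List α → List β → δ
  | [], [] => 0
  | [], y :: ys => C.insert y + levenshtein C [] ys
  | x :: xs, [] => C.delete x + levenshtein C xs []
  | x :: xs, y :: ys =>
      min (C.delete x + levenshtein C xs (y :: ys))
        (min (C.insert y + levenshtein C (x :: xs) ys) (C.substitute x y + levenshtein C xs ys))

/-- The unit-cost Levenshtein edit distance. -/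
def editDist {α : Type*} [DecidableEq α] (A B : List α) : ℕ :=
  levenshtein Levenshtein.defaultCost A B

/-!
The standard recurrence for `editDist (a :: A) (b :: B)` is a minimum of three sub-distances,
each of which is inductively monotone under appending one more letter to both lists, so the
minimum is monotone too. When one list is empty, the length bound
`|A.length - B.length| ≤ editDist A B` closes the case. Appending equal-length suffixes is then
iterated one letter at a time, and the diagonal statement about prefixes is the special case
`A.take (x + k) = A.take x ++ (A.drop x).take k`.
-/

section

variable {α : Type*} [DecidableEq α]

@[simp]
lemma editDist_nil_left (B : List α) : editDist [] B = B.length := by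
  induction B with
  | nil => simp [editDist, levenshtein]
  | cons b B ih => simp_all [editDist, levenshtein, Levenshtein.defaultCost, add_comm]

@[simp]
lemma editDist_nil_right (A : List α) : editDist A [] = A.length := by
  induction A with
  | nil => simp [editDist, levenshtein]
  | cons a A ih => simp_all [editDist, levenshtein, Levenshtein.defaultCost, add_comm]

lemma editDist_cons_cons (a b : α) (A B : List α) :
    editDist (a :: A) (b :: B) =
      min (1 + editDist A (b :: B))
        (min (1 + editDist (a :: A) B) ((if a = b then 0 else 1) + editDist A B)) := by
  simp [editDist, levenshtein, Levenshtein.defaultCost]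

lemma length_le_length_add_editDist_left : ∀ A B : List α, A.length ≤ B.length + editDist A B
  | [], _ => Nat.zero_le _
  | a :: A, [] => by simp
  | a :: A, b :: B => by
    have h₁ := length_le_length_add_editDist_left A (b :: B)
    have h₂ := length_le_length_add_editDist_left (a :: A) B
    have h₃ := length_le_length_add_editDist_left A B
    simp only [editDist_cons_cons, List.length_cons] at *
    split_ifs at * <;> omega

lemma length_le_length_add_editDist_right : ∀ A B : List α, B.length ≤ A.length + editDist A B
  | _, [] => Nat.zero_le _
  | [], b :: B => by simp
  | a :: A, b :: B => by
    have h₁ := length_le_length_add_editDist_right A (b :: B)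
    have h₂ := length_le_length_add_editDist_right (a :: A) B
    have h₃ := length_le_length_add_editDist_right A B
    simp only [editDist_cons_cons, List.length_cons] at *
    split_ifs at * <;> omega

lemma editDist_le_editDist_append_singleton (c d : α) :
    ∀ A B : List α, editDist A B ≤ editDist (A ++ [c]) (B ++ [d])
  | [], B => by
    have := length_le_length_add_editDist_right [c] (B ++ [d])
    simp only [List.nil_append, editDist_nil_left, List.length_append, List.length_singleton] at *
    omega
  | a :: A, [] => by
    have := length_le_length_add_editDist_left (a :: A ++ [c]) [d]
    simp only [List.nil_append, editDist_nil_right, List.length_append, List.length_cons] at *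
    omega
  | a :: A, b :: B => by
    have h₁ := editDist_le_editDist_append_singleton c d A (b :: B)
    have h₂ := editDist_le_editDist_append_singleton c d (a :: A) B
    have h₃ := editDist_le_editDist_append_singleton c d A B
    simp only [List.cons_append, editDist_cons_cons] at *
    exact min_le_min (by omega) (min_le_min (by omega) (by omega))

lemma editDist_le_editDist_append_of_length_eq (A B : List α) {C D : List α}
    (h : C.length = D.length) : editDist A B ≤ editDist (A ++ C) (B ++ D) := by
  induction C generalizing A B D with
  | nil => simp [List.eq_nil_of_length_eq_zero h.symm]
  | cons c C ih =>
    obtain _ | ⟨d, D⟩ := D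
    · simp at h
    calc editDist A B ≤ editDist (A ++ [c]) (B ++ [d]) :=
          editDist_le_editDist_append_singleton c d A B
      _ ≤ editDist (A ++ [c] ++ C) (B ++ [d] ++ D) := ih _ _ (by simpa using h)
      _ = editDist (A ++ c :: C) (B ++ d :: D) := by simp

lemma editDist_take_le_editDist_take (A B : List α) {x y x' y' : ℕ} (hx : x ≤ x') (hy : y ≤ y')
    (hxy : x' - x = y' - y) (hxA : x' ≤ A.length) (hyB : y' ≤ B.length) :
    editDist (A.take x) (B.take y) ≤ editDist (A.take x') (B.take y') := by
  obtain ⟨k, rfl⟩ := Nat.exists_eq_add_of_le hx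
  obtain ⟨l, rfl⟩ := Nat.exists_eq_add_of_le hy
  rw [List.take_add, List.take_add]
  apply editDist_le_editDist_append_of_length_eq
  simp only [List.length_take, List.length_drop]
  omega

end

/-- Appending equal-length suffixes does not decrease the edit distance; in particular,
the edit distance between prefixes is non-decreasing along any diagonal of the DP grid. -/
theorem editDist_le_editDist_append {α : Type*} [DecidableEq α] :
    (∀ A B C D : List α, C.length = D.length →
      editDist A B ≤ editDist (A ++ C) (B ++ D)) ∧
    (∀ (A B : List α) (x y x' y' : ℕ), x ≤ x' → y ≤ y' → x' - x = y' - y →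
      x' ≤ A.length → y' ≤ B.length →
      editDist (A.take x) (B.take y) ≤ editDist (A.take x') (B.take y')) :=
  ⟨fun A B _ _ h => editDist_le_editDist_append_of_length_eq A B h,
    fun A B _ _ _ _ hx hy hxy hxA hyB => editDist_take_le_editDist_take A B hx hy hxy hxA hyB⟩
end

section
/- Base case of the Landau–Vishkin BFS: for a diagonal i with −m ≤ i ≤ n, the set S_0(i) is nonempty if and only if i = 0, and f(0,0) = lcp(A,B), the length of the longest common prefix of A and B. -/
/-- The longest-common-prefix length: the largest `l ≤ min(|A|, |B|)`
with `A.take l = B.take l`. -/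
def lcp {α : Type*} [DecidableEq α] (A B : List α) : ℕ :=
  Nat.findGreatest (fun l => A.take l = B.take l) (min A.length B.length)

/-- `S_t(i)`: the set of points `x` in the domain of diagonal `i` whose prefix edit distance
`d_i(x) = d(A.take x, B.take (x - i))` is at most `t`. -/
def diagSet {α : Type*} [DecidableEq α] (A B : List α) (t : ℕ) (i : ℤ) : Set ℤ :=
  {x | max 0 i ≤ x ∧ x ≤ min (A.length : ℤ) ((B.length : ℤ) + i) ∧
    editDist (A.take x.toNat) (B.take (x - i).toNat) ≤ t}

/-!
Edit distance zero means equality, so `S_0(i)` consists of the `x` with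
`A.take x = B.take (x - i)`. Inside the diagonal domain both prefixes have their nominal
lengths `x` and `x - i`, which forces `i = 0`; on the main diagonal the members are exactly the
common prefix lengths, whose maximum is `lcp A B`.
-/

section
variable {α : Type*} [DecidableEq α]

theorem editDist_self (A : List α) : editDist A A = 0 := by
  induction A with
  | nil => simp [editDist, levenshtein]
  | cons a as ih =>
    unfold editDist at ih ⊢
    rw [levenshtein.eq_4]
    refine Nat.le_zero.mp <| (min_le_right _ _).trans <| (min_le_right _ _).trans ?_
    rw [ih]
    simp [Levenshtein.defaultCost]

theorem eq_of_editDist_eq_zero : ∀ {A B : List α}, editDist A B = 0 → A = B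
  | [], [], _ => rfl
  | [], _ :: _, h | _ :: _, [], h => by
    simp [editDist, levenshtein, Levenshtein.defaultCost] at h
  | a :: as, b :: bs, h => by
    have hsub : Levenshtein.defaultCost.substitute a b + editDist as bs = 0 := by
      simp only [editDist, levenshtein.eq_4, Levenshtein.defaultCost] at h ⊢
      omega
    simp only [Levenshtein.defaultCost, Nat.add_eq_zero_iff, ite_eq_left_iff, one_ne_zero,
      imp_false, not_not] at hsub
    rw [hsub.1, eq_of_editDist_eq_zero hsub.2]

theorem editDist_eq_zero_iff {A B : List α} : editDist A B = 0 ↔ A = B :=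
  ⟨eq_of_editDist_eq_zero, fun h => h ▸ editDist_self A⟩

variable (A B : List α)

theorem take_lcp_eq_take_lcp : A.take (lcp A B) = B.take (lcp A B) :=
  Nat.findGreatest_spec (P := fun l => A.take l = B.take l) (Nat.zero_le _) rfl

theorem lcp_le_min_length : lcp A B ≤ min A.length B.length :=
  Nat.findGreatest_le _

variable {A B}

theorem le_lcp_of_take_eq {l : ℕ} (hA : l ≤ A.length) (hB : l ≤ B.length)
    (h : A.take l = B.take l) : l ≤ lcp A B :=
  Nat.le_findGreatest (le_min hA hB) h

theorem mem_diagSet_zero {i x : ℤ} :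
    x ∈ diagSet A B 0 i ↔ max 0 i ≤ x ∧ x ≤ min (A.length : ℤ) (B.length + i) ∧
      A.take x.toNat = B.take (x - i).toNat := by
  simp only [diagSet, Set.mem_ofPred_eq, Nat.le_zero, editDist_eq_zero_iff]

variable (A B)

theorem diagSet_zero_nonempty_iff (i : ℤ) : (diagSet A B 0 i).Nonempty ↔ i = 0 := by
  constructor
  · rintro ⟨x, hx⟩
    obtain ⟨hlo, hhi, htake⟩ := mem_diagSet_zero.mp hx
    have hlen := congrArg List.length htake
    simp only [List.length_take] at hlen
    omega
  · rintro rfl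
    exact ⟨0, mem_diagSet_zero.mpr ⟨le_rfl, by simp, rfl⟩⟩

theorem isGreatest_diagSet_zero_zero_lcp : IsGreatest (diagSet A B 0 0) (lcp A B) := by
  refine ⟨mem_diagSet_zero.mpr ⟨?_, ?_, ?_⟩, fun x hx => ?_⟩
  · simp
  · have := lcp_le_min_length A B
    omega
  · simpa using take_lcp_eq_take_lcp A B
  · obtain ⟨hlo, hhi, htake⟩ := mem_diagSet_zero.mp hx
    rw [sub_zero] at htake
    have := le_lcp_of_take_eq (by omega) (by omega) htake
    omega

end

theorem landau_vishkin_base_general {α : Type*} [DecidableEq α] (A B : List α) (i : ℤ) :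
    ((diagSet A B 0 i).Nonempty ↔ i = 0) ∧
    IsGreatest (diagSet A B 0 0) (lcp A B : ℤ) :=
  ⟨diagSet_zero_nonempty_iff A B i, isGreatest_diagSet_zero_zero_lcp A B⟩

/-- Base case of the Landau–Vishkin BFS: `S_0(i)` is nonempty iff `i = 0`, and
`f(0,0) = lcp(A,B)`. -/
theorem landau_vishkin_base {α : Type*} [DecidableEq α] (A B : List α) (i : ℤ)
    (hi₁ : -(B.length : ℤ) ≤ i) (hi₂ : i ≤ (A.length : ℤ)) :
    ((diagSet A B 0 i).Nonempty ↔ i = 0) ∧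
    IsGreatest (diagSet A B 0 0) (lcp A B : ℤ) :=
  landau_vishkin_base_general A B i
end

section
/- LCP of lexicographically sorted strings via range minimum: let α be a linear order and s_0 ≤ s_1 ≤ … ≤ s_{N−1} be lists over α that are non-decreasing in the lexicographic order on lists. Then for all indices i < j < N, lcp(s_i, s_j) = min over i < l ≤ j of lcp(s_{l−1}, s_l). (This is the fact underlying answering LCP queries on a suffix array by a range-minimum query over the LCP array of adjacent ranked suffixes.) -/
theorem List.monotone_take {α : Type*} [LinearOrder α] (k : ℕ) :
    Monotone (List.take (α := α) k) := by
  intro A B hle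
  obtain hlt | rfl := hle.lt_or_eq
  · clear hle
    induction hlt generalizing k with
    | nil =>
      cases k
      · rfl
      · exact le_of_lt (List.Lex.nil : List.Lex (· < ·) [] _)
    | cons _ ih =>
      cases k
      · rfl
      · exact List.cons_le_cons _ (ih _)
    | rel h =>
      cases k
      · rfl
      · exact le_of_lt (List.Lex.rel h : List.Lex (· < ·) _ _)
  · rfl

theorem le_lcp_iff {α : Type*} [DecidableEq α] {A B : List α} {k : ℕ} :
    k ≤ lcp A B ↔ k ≤ A.length ∧ k ≤ B.length ∧ A.take k = B.take k := by
  constructor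
  · intro hk
    have hlcp : A.take (lcp A B) = B.take (lcp A B) :=
      Nat.findGreatest_spec (P := fun l => A.take l = B.take l) (Nat.zero_le _) rfl
    have hle : lcp A B ≤ min A.length B.length := Nat.findGreatest_le _
    refine ⟨by omega, by omega, ?_⟩
    rw [← min_eq_left hk, ← List.take_take, hlcp, List.take_take]
  · rintro ⟨hA, hB, h⟩
    exact Nat.le_findGreatest (le_min hA hB) h

theorem eq_inf'_Icc_of_forall_eq_inf {β : Type*} [SemilatticeInf β] (d : ℕ → ℕ → β) {i j : ℕ}
    (hij : i < j) (hd : ∀ k, i < k → k < j → d i (k + 1) = d i k ⊓ d k (k + 1)) :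
    d i j = (Finset.Icc (i + 1) j).inf' (Finset.nonempty_Icc.mpr hij) (fun l => d (l - 1) l) := by
  induction j, Nat.succ_le_of_lt hij using Nat.le_induction with
  | base => simp
  | succ j hj ih =>
    rw [hd j hj (by omega), ih (by omega) fun k hik hkj => hd k hik (by omega)]
    simp only [← Finset.insert_Icc_right_eq_Icc_add_one (by omega : i + 1 ≤ j + 1)]
    rw [Finset.inf'_insert, inf_comm, Nat.add_sub_cancel]

theorem lcp_eq_min_of_le_of_le {α : Type*} [LinearOrder α] {A B C : List α}
    (hAB : A ≤ B) (hBC : B ≤ C) : lcp A C = min (lcp A B) (lcp B C) := by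
  refine eq_of_forall_le_iff fun k => ?_
  simp only [le_min_iff, le_lcp_iff]
  constructor
  · rintro ⟨hA, hC, hAC⟩
    have hAB' : A.take k = B.take k :=
      le_antisymm (List.monotone_take k hAB) (hAC ▸ List.monotone_take k hBC)
    have hB : k ≤ B.length := by
      simpa [hA] using congrArg List.length hAB'
    exact ⟨⟨hA, hB, hAB'⟩, hB, hC, hAB' ▸ hAC⟩
  · rintro ⟨⟨hA, -, hAB⟩, -, hC, hBC⟩
    exact ⟨hA, hC, hAB.trans hBC⟩

/-- LCP of lexicographically sorted strings via range minimum: if `s 0 ≤ s 1 ≤ … ≤ s (N-1)`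
in the lexicographic order on lists, then for `i < j < N` the LCP of `s i` and `s j` is the
minimum of the LCPs of adjacent pairs in between. -/
theorem lcp_sorted_range_min {α : Type*} [LinearOrder α] (N : ℕ) (s : ℕ → List α)
    (hs : ∀ a b : ℕ, a ≤ b → b < N → s a ≤ s b)
    (i j : ℕ) (hij : i < j) (hjN : j < N) :
    lcp (s i) (s j) =
      (Finset.Icc (i + 1) j).inf' (Finset.nonempty_Icc.mpr hij)
        (fun l => lcp (s (l - 1)) (s l)) :=
  eq_inf'_Icc_of_forall_eq_inf (fun a b => lcp (s a) (s b)) hij fun k hik hkj =>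
    lcp_eq_min_of_le_of_le (hs i k hik.le (by omega)) (hs k (k + 1) k.le_succ (by omega))
end
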